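/- arXiv:1810.11552 — 3 statements merged into one kernel-verified Lean document; each statement's English description precedes it below -/
import Mathlib

section
/- Let M be a matroid on a finite ground set E and let w : E → ℝ. Then there exists a matroid M_w on the same ground set E whose bases are exactly the w-maximal bases of M, i.e., the bases B of M satisfying ∑_{e∈B} w(e) = max_{B' a base of M} ∑_{e∈B'} w(e). In particular, the collection of w-maximal bases of M satisfies the base-exchange property, and M_w has the same rank as M. -/
/-!
If `B₁` and `B₂` are `w`-maximal bases and `e ∈ B₁ \ B₂`, the symmetric exchange property gives
`f ∈ B₂ \ B₁` such that both `B₁ - e + f` and `B₂ - f + e` are bases. Maximality of `B₁` gives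
`w f ≤ w e` and maximality of `B₂` gives `w e ≤ w f`, so `B₁ - e + f` has the weight of `B₁` and
is again `w`-maximal. Hence the `w`-maximal bases satisfy the base-exchange axiom.
-/

open Set

lemma finsum_mem_insert_sdiff_singleton_add {α β : Type*} [AddCommMonoid β] (w : α → β)
    {B : Set α} {e f : α} (hB : B.Finite) (he : e ∈ B) (hf : f ∉ B) :
    ∑ᶠ x ∈ insert f (B \ {e}), w x + w e = ∑ᶠ x ∈ B, w x + w f := by
  have hB_eq : insert e (B \ {e}) = B := by rw [insert_sdiff_singleton, insert_eq_of_mem he]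
  have he' : e ∉ B \ {e} := fun h ↦ h.2 rfl
  have hf' : f ∉ B \ {e} := fun h ↦ hf h.1
  conv_rhs => rw [← hB_eq, finsum_mem_insert w he' hB.sdiff]
  rw [finsum_mem_insert w hf' hB.sdiff]
  abel

namespace Matroid

variable {α : Type*} {M : Matroid α} {B₁ B₂ : Set α} {e : α}

lemma IsBase.exists_symm_exchange (hB₁ : M.IsBase B₁) (hB₂ : M.IsBase B₂) (he : e ∈ B₁ \ B₂) :
    ∃ f ∈ B₂ \ B₁, M.IsBase (insert f (B₁ \ {e})) ∧ M.IsBase (insert e (B₂ \ {f})) := by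
  have heE : e ∈ M.E := hB₁.subset_ground he.1
  have hecl : e ∈ M.closure B₂ := by rw [hB₂.closure_eq]; exact heE
  -- `f` is taken from the fundamental circuit of `e` in `B₂`, outside the hyperplane
  -- spanned by `B₁ - e`.
  set C := M.fundCircuit e B₂
  have hC : M.IsCircuit C := hB₂.fundCircuit_isCircuit heE he.2
  obtain ⟨f, ⟨hfC, hfe⟩, hfcl⟩ := not_subset.1 fun (hsub : C \ {e} ⊆ M.closure (B₁ \ {e})) ↦
    hB₁.indep.notMem_closure_sdiff_of_mem he.1 <|
      M.closure_subset_closure_of_subset_closure hsub (hC.mem_closure_sdiff_singleton_of_mem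
        (M.mem_fundCircuit e B₂))
  have hfB₂ : f ∈ B₂ := (mem_insert_iff.1 (M.fundCircuit_subset_insert e B₂ hfC)).resolve_left hfe
  have hfB₁ : f ∉ B₁ := fun hfB₁ ↦
    hfcl (M.subset_closure _ (sdiff_subset.trans hB₁.subset_ground) ⟨hfB₁, hfe⟩)
  refine ⟨f, ⟨hfB₂, hfB₁⟩, hB₁.exchange_base_of_notMem_closure he.1 hfcl
    (hB₂.subset_ground hfB₂), ?_⟩
  rw [insert_sdiff_singleton_comm (Ne.symm hfe)]
  exact hB₂.exchange_isBase_of_indep' hfB₂ he.2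
    ((hB₂.indep.mem_fundCircuit_iff hecl he.2).1 hfC)

def IsMaxWeightBase {β : Type*} [AddCommMonoid β] [LE β] (M : Matroid α) (w : α → β)
    (B : Set α) : Prop :=
  M.IsBase B ∧ ∀ B', M.IsBase B' → ∑ᶠ e ∈ B', w e ≤ ∑ᶠ e ∈ B, w e

variable {β : Type*} [AddCommMonoid β] [LinearOrder β]

lemma exists_isMaxWeightBase (M : Matroid α) [M.Finite] (w : α → β) :
    ∃ B, M.IsMaxWeightBase w B := by
  have hfin : {B | M.IsBase B}.Finite :=
    M.ground_finite.finite_subsets.subset fun _ hB ↦ hB.subset_ground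
  obtain ⟨B, hB, hmax⟩ := exists_max_image _ (fun B ↦ ∑ᶠ e ∈ B, w e) hfin M.exists_isBase
  exact ⟨B, hB, hmax⟩

variable [IsOrderedCancelAddMonoid β]

lemma isMaxWeightBase_exchange [M.RankFinite] (w : α → β) :
    ExchangeProperty (M.IsMaxWeightBase w) := by
  rintro B₁ B₂ ⟨hB₁, hmax₁⟩ ⟨hB₂, hmax₂⟩ e he
  obtain ⟨f, hf, hB₁', hB₂'⟩ := hB₁.exists_symm_exchange hB₂ he
  have hsum₁ := finsum_mem_insert_sdiff_singleton_add w hB₁.finite he.1 hf.2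
  have hsum₂ := finsum_mem_insert_sdiff_singleton_add w hB₂.finite hf.1 he.2
  have hfe : w f ≤ w e := le_of_add_le_add_left <|
    hsum₁ ▸ add_le_add_left (hmax₁ _ hB₁') (w e)
  have hef : w e ≤ w f := le_of_add_le_add_left <|
    hsum₂ ▸ add_le_add_left (hmax₂ _ hB₂') (w f)
  have hsum_eq : ∑ᶠ x ∈ insert f (B₁ \ {e}), w x = ∑ᶠ x ∈ B₁, w x :=
    add_right_cancel (hsum₁.trans (by rw [le_antisymm hfe hef]))
  exact ⟨f, hf, hB₁', fun B' hB' ↦ hsum_eq ▸ hmax₁ B' hB'⟩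

def maxWeightBaseMatroid (M : Matroid α) [M.Finite] (w : α → β) : Matroid α :=
  Matroid.ofIsBaseOfFinite M.ground_finite (M.IsMaxWeightBase w) (M.exists_isMaxWeightBase w)
    (isMaxWeightBase_exchange w) fun _ hB ↦ hB.1.subset_ground

@[simp] lemma maxWeightBaseMatroid_ground (M : Matroid α) [M.Finite] (w : α → β) :
    (M.maxWeightBaseMatroid w).E = M.E := rfl

@[simp] lemma maxWeightBaseMatroid_isBase_iff [M.Finite] {w : α → β} {B : Set α} :
    (M.maxWeightBaseMatroid w).IsBase B ↔ M.IsMaxWeightBase w B := Iff.rfl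

end Matroid

/-- Let `M` be a matroid on a finite ground set and `w` a real weight
function. Then there is a matroid `Mw` on the same ground set whose bases are exactly the
`w`-maximal bases of `M` (in particular the `w`-maximal bases satisfy the base-exchange
property, since they are the bases of a matroid), and `Mw` has the same rank as `M`
(any base of `Mw` has the same cardinality as any base of `M`). -/
theorem matroid_of_w_maximal_bases {α : Type*} (M : Matroid α) (hM : M.Finite)
    (w : α → ℝ) :
    ∃ Mw : Matroid α,
      Mw.E = M.E ∧
      (∀ B : Set α, Mw.IsBase B ↔
        (M.IsBase B ∧ ∀ B' : Set α, M.IsBase B' → ∑ᶠ e ∈ B', w e ≤ ∑ᶠ e ∈ B, w e)) ∧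
      (∀ B B' : Set α, Mw.IsBase B → M.IsBase B' → B.encard = B'.encard) := by
  refine ⟨M.maxWeightBaseMatroid w, M.maxWeightBaseMatroid_ground w,
    fun B ↦ Matroid.maxWeightBaseMatroid_isBase_iff, fun B B' hB hB' ↦ ?_⟩
  exact (Matroid.maxWeightBaseMatroid_isBase_iff.1 hB).1.encard_eq_encard_of_isBase hB'
end

section
/- Let k be a field, n a positive integer, w ∈ ℤⁿ, ξ ∈ kˣ a unit, and I an ideal of the Laurent polynomial ring k[x₁^{±1},…,x_n^{±1}]. Then the initial ideal in_w I is invariant under σ_{ξ,w}: for every g ∈ in_w I one has σ_{ξ,w}(g) ∈ in_w I, and hence σ_{ξ,w}(in_w I) = in_w I. -/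
noncomputable section
open scoped Classical

/-- The Laurent polynomial ring `k[x₁^{±1},…,x_n^{±1}]`, realized as the additive monoid
algebra on `ℤⁿ`. -/
abbrev Laur (k : Type*) [CommRing k] (n : ℕ) : Type _ := AddMonoidAlgebra k (Fin n → ℤ)

variable {k : Type*} {n : ℕ}

/-- The standard pairing `⟨u,w⟩ = ∑ i, uᵢ wᵢ`. -/
def pairZ (u w : Fin n → ℤ) : ℤ := ∑ i, u i * w i

/-- `trop(f)(w) = min {⟨u,w⟩ : u ∈ supp f}` (junk value for `f = 0`). -/
def tropZ [CommRing k] (w : Fin n → ℤ) (f : Laur k n) : ℤ :=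
  sInf ((fun u => pairZ u w) '' (f.coeff.support : Set (Fin n → ℤ)))

/-- `init_w f`: the sum of the terms of `f` whose exponent `u` satisfies
`⟨u,w⟩ = trop(f)(w)`; `init_w 0 = 0`. -/
def initZ [CommRing k] (w : Fin n → ℤ) (f : Laur k n) : Laur k n :=
  AddMonoidAlgebra.ofCoeff (Finsupp.filter (fun u => pairZ u w = tropZ w f) f.coeff)

/-- The initial ideal `in_w I`, generated by the initial forms of elements of `I`. -/
def initIdealZ [CommRing k] (w : Fin n → ℤ) (I : Ideal (Laur k n)) : Ideal (Laur k n) :=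
  Ideal.span {g | ∃ f ∈ I, g = initZ w f}

/-- `σ_{ξ,w}`: the `k`-algebra automorphism of the Laurent polynomial ring determined by
`x^u ↦ ξ^{⟨u,w⟩} x^u`. -/
def sigmaTw [Field k] (ξ : kˣ) (w : Fin n → ℤ) (f : Laur k n) : Laur k n :=
  ∑ u ∈ f.coeff.support, AddMonoidAlgebra.single u (((ξ ^ pairZ u w : kˣ) : k) * f.coeff u)

/-!
Every term of `init_w f` has `⟨u,w⟩ = trop(f)(w)`, so `σ_{ξ,w}` merely multiplies `init_w f`
by the scalar `ξ^{trop(f)(w)}` and hence maps the generators of `in_w I` into `in_w I`. Since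
`σ_{ξ,w}` is a ring endomorphism it preserves the ideal they generate, and `σ_{ξ⁻¹,w}` inverts it.
-/

lemma pairZ_add (u v w : Fin n → ℤ) : pairZ (u + v) w = pairZ u w + pairZ v w := by
  simp [pairZ, add_mul, Finset.sum_add_distrib]

lemma pairZ_zero (w : Fin n → ℤ) : pairZ (0 : Fin n → ℤ) w = 0 := by simp [pairZ]

section Field

variable [Field k]

lemma coeff_sigmaTw (ξ : kˣ) (w : Fin n → ℤ) (f : Laur k n) (u : Fin n → ℤ) :
    (sigmaTw ξ w f).coeff u = ((ξ ^ pairZ u w : kˣ) : k) * f.coeff u := by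
  unfold sigmaTw
  rw [AddMonoidAlgebra.coeff_sum, Finset.sum_apply']
  by_cases hu : u ∈ f.coeff.support
  · rw [Finset.sum_eq_single u (fun v _ hvu => by simp [hvu]) (absurd hu)]
    simp
  · rw [Finsupp.notMem_support_iff.mp hu, mul_zero]
    refine Finset.sum_eq_zero fun v hv => ?_
    simp [show v ≠ u from fun h => hu (h ▸ hv)]

lemma sigmaTw_sigmaTw_inv (ξ : kˣ) (w : Fin n → ℤ) (g : Laur k n) :
    sigmaTw ξ w (sigmaTw ξ⁻¹ w g) = g := by
  ext u
  rw [coeff_sigmaTw, coeff_sigmaTw, ← mul_assoc, ← Units.val_mul, ← mul_zpow,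
    mul_inv_cancel, one_zpow, Units.val_one, one_mul]

def sigmaMonoidHom (ξ : kˣ) (w : Fin n → ℤ) : Multiplicative (Fin n → ℤ) →* Laur k n where
  toFun u := AddMonoidAlgebra.single u.toAdd ((ξ ^ pairZ u.toAdd w : kˣ) : k)
  map_one' := by simp [pairZ_zero]; rfl
  map_mul' u v := by
    rw [AddMonoidAlgebra.single_mul_single]
    simp [pairZ_add, zpow_add]

def sigmaAlgHom (ξ : kˣ) (w : Fin n → ℤ) : Laur k n →ₐ[k] Laur k n :=
  AddMonoidAlgebra.lift k (Laur k n) (Fin n → ℤ) (sigmaMonoidHom ξ w)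

lemma sigmaAlgHom_apply (ξ : kˣ) (w : Fin n → ℤ) (f : Laur k n) :
    sigmaAlgHom ξ w f = sigmaTw ξ w f := by
  rw [sigmaAlgHom, AddMonoidAlgebra.lift_apply, sigmaTw, Finsupp.sum]
  refine Finset.sum_congr rfl fun u _ => ?_
  simp [sigmaMonoidHom, AddMonoidAlgebra.smul_single, mul_comm]

lemma pairZ_eq_tropZ_of_mem_support_initZ {w u : Fin n → ℤ} {f : Laur k n}
    (hu : u ∈ (initZ w f).coeff.support) : pairZ u w = tropZ w f := by
  by_contra h
  simp [initZ, h] at hu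

lemma sigmaTw_initZ (ξ : kˣ) (w : Fin n → ℤ) (f : Laur k n) :
    sigmaTw ξ w (initZ w f) = ((ξ ^ tropZ w f : kˣ) : k) • initZ w f := by
  ext u
  rw [coeff_sigmaTw, AddMonoidAlgebra.coeff_smul_apply, smul_eq_mul]
  by_cases hu : u ∈ (initZ w f).coeff.support
  · rw [pairZ_eq_tropZ_of_mem_support_initZ hu]
  · simp [Finsupp.notMem_support_iff.mp hu]

lemma sigmaTw_mem_initIdealZ (ξ : kˣ) (w : Fin n → ℤ) (I : Ideal (Laur k n))
    {g : Laur k n} (hg : g ∈ initIdealZ w I) : sigmaTw ξ w g ∈ initIdealZ w I := by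
  suffices initIdealZ w I ≤ (initIdealZ w I).comap (sigmaAlgHom ξ w) by
    simpa [sigmaAlgHom_apply] using this hg
  refine Ideal.span_le.mpr ?_
  rintro _ ⟨f, hf, rfl⟩
  rw [SetLike.mem_coe, Ideal.mem_comap, sigmaAlgHom_apply, sigmaTw_initZ]
  exact Submodule.smul_of_tower_mem _ _ (Ideal.subset_span ⟨f, hf, rfl⟩)

end Field

theorem sigma_preserves_initial_ideal_general [Field k] (w : Fin n → ℤ) (ξ : kˣ)
    (I : Ideal (Laur k n)) :
    (∀ g ∈ initIdealZ w I, sigmaTw ξ w g ∈ initIdealZ w I) ∧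
    sigmaTw ξ w '' (initIdealZ w I : Set (Laur k n)) = (initIdealZ w I : Set (Laur k n)) := by
  refine ⟨fun g hg => sigmaTw_mem_initIdealZ ξ w I hg, ?_⟩
  refine (Set.image_subset_iff.mpr fun g hg => sigmaTw_mem_initIdealZ ξ w I hg).antisymm ?_
  exact fun g hg => ⟨sigmaTw ξ⁻¹ w g, sigmaTw_mem_initIdealZ ξ⁻¹ w I hg, sigmaTw_sigmaTw_inv ξ w g⟩

/-- For any ideal `I` of the Laurent polynomial ring, the initial ideal
`in_w I` is invariant under `σ_{ξ,w}`: every `g ∈ in_w I` has `σ_{ξ,w}(g) ∈ in_w I`, and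
hence `σ_{ξ,w}(in_w I) = in_w I`. -/
theorem sigma_preserves_initial_ideal [Field k] (hn : 0 < n) (w : Fin n → ℤ) (ξ : kˣ)
    (I : Ideal (Laur k n)) :
    (∀ g ∈ initIdealZ w I, sigmaTw ξ w g ∈ initIdealZ w I) ∧
    sigmaTw ξ w '' (initIdealZ w I : Set (Laur k n)) = (initIdealZ w I : Set (Laur k n)) :=
  sigma_preserves_initial_ideal_general w ξ I

end
end

section
/- Let k be an algebraically closed field, let 1 ≤ d < n, let V ⊆ kⁿ be a d-dimensional linear subspace not contained in any coordinate hyperplane, let M be the associated rank-d loop-free matroid on {1,…,n}, and let w = (w₁,…,w_n) ∈ ℝⁿ. Then there exist f₁,…,f_{n−d} ∈ k[x₁,…,x_n] that generate the vanishing ideal I(V) ⊆ k[x₁,…,x_n], such that the initial forms init_w f₁,…,init_w f_{n−d} generate the initial ideal in_w(I(V)·k[x₁^{±1},…,x_n^{±1}]) in the Laurent polynomial ring, and such that w₁ + ⋯ + w_n − (trop(f₁)(w) + ⋯ + trop(f_{n−d})(w)) = wt_M(w), where wt_M(w) = max_{B a base of M} ∑_{i∈B} w_i. -/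
noncomputable section
open scoped Classical

variable {k : Type*} [Field k] {n : ℕ}

/-- The monomial `x^u` of the Laurent polynomial ring. -/
def xu (u : Fin n → ℤ) : Laur k n := AddMonoidAlgebra.single u 1

/-- The pairing `⟨u,w⟩ = ∑ i, uᵢ wᵢ` of an integral exponent with a real weight. -/
def pairR (u : Fin n → ℤ) (w : Fin n → ℝ) : ℝ := ∑ i, (u i : ℝ) * w i

/-- `trop(f)(w) = min {⟨u,w⟩ : u ∈ supp f}` (junk value for `f = 0`). -/
def tropR (w : Fin n → ℝ) (f : Laur k n) : ℝ :=
  sInf ((fun u => pairR u w) '' (f.coeff.support : Set (Fin n → ℤ)))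

/-- `init_w f`: the sum of the terms of `f` whose exponent `u` satisfies
`⟨u,w⟩ = trop(f)(w)`; `init_w 0 = 0`. -/
def initR (w : Fin n → ℝ) (f : Laur k n) : Laur k n :=
  AddMonoidAlgebra.ofCoeff (Finsupp.filter (fun u => pairR u w = tropR w f) f.coeff)

/-- The initial ideal `in_w I`, generated by the initial forms of elements of `I`. -/
def initIdealR (w : Fin n → ℝ) (I : Ideal (Laur k n)) : Ideal (Laur k n) :=
  Ideal.span {g | ∃ f ∈ I, g = initR w f}

/-- The natural inclusion of the polynomial ring into the Laurent polynomial ring,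
sending `xᵢ` to `x^{eᵢ}`. -/
def toLaurent : MvPolynomial (Fin n) k →ₐ[k] Laur k n :=
  MvPolynomial.aeval (fun i => xu (Pi.single i 1))

/-- The vanishing ideal `I(V) ⊆ k[x₁,…,x_n]` of a linear subspace `V ⊆ kⁿ`. -/
def vanishingIdeal (V : Submodule k (Fin n → k)) : Ideal (MvPolynomial (Fin n) k) where
  carrier := {p | ∀ v ∈ V, MvPolynomial.eval v p = 0}
  add_mem' := by
    intro a b ha hb v hv
    simp [Set.mem_setOf_eq] at *
    simp [ha v hv, hb v hv]
  zero_mem' := by intro v hv; simp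
  smul_mem' := by
    intro c p hp v hv
    simp only [Set.mem_setOf_eq, smul_eq_mul, map_mul] at *
    simp [hp v hv]

/-- The coordinate functional `xᵢ` restricted to the subspace `V`. -/
def coordOn (V : Submodule k (Fin n → k)) (i : Fin n) : V →ₗ[k] k :=
  (LinearMap.proj i : (Fin n → k) →ₗ[k] k).domRestrict V

/-- `M` is the matroid on `{1,…,n}` associated to the subspace `V ⊆ kⁿ`: its ground set is
everything and a set `S` is independent iff the coordinate functionals `xᵢ|_V`, `i ∈ S`,
are linearly independent. -/
def IsSubspaceMatroid (V : Submodule k (Fin n → k)) (M : Matroid (Fin n)) : Prop :=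
  M.E = Set.univ ∧
    ∀ S : Set (Fin n), M.Indep S ↔ LinearIndependent k (fun i : S => coordOn V (i : Fin n))

/-- A circuit of a matroid is a minimal dependent set. -/
def Matroid.IsCircuit' {α : Type*} (M : Matroid α) (C : Set α) : Prop :=
  Minimal M.Dep C

/-!
Choose a base `B` of `M` of maximal `w`-weight and, for `j ∉ B`, write
`xⱼ|_V = ∑_{i ∈ B} c_{ji} xᵢ|_V`; the generators are the linear forms
`ℓⱼ = xⱼ - ∑_{i ∈ B} c_{ji} xᵢ`. If `c_{ji} ≠ 0` then `B - i + j` is again a base, so maximality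
of `B` gives `wⱼ ≤ wᵢ`. Hence `trop(ℓⱼ)(w) = wⱼ`, and the weight identity reduces to
`∑_{i ∈ B} wᵢ = wt_M(w)`.

Dividing a polynomial `q` by the `ℓⱼ`, i.e. substituting `∑ c_{ji} xᵢ` for `xⱼ`, never lowers
`w`-weights. If `q ∈ I(V)`, the remainder is a polynomial in the variables of `B` vanishing on `V`,
hence zero since `V → k^B` is onto. So `q = ∑ hⱼ ℓⱼ` with every term of weight at least
`trop(q)(w)`, and taking parts of weight exactly `trop(q)(w)` puts `init_w q` in the ideal of the
`init_w ℓⱼ`. A Laurent polynomial in the extended ideal becomes such a `q` after multiplication by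
a monomial, which commutes with `init_w`.
-/

section Laurent

open AddMonoidAlgebra

variable (w : Fin n → ℝ)

lemma pairR_add (u v : Fin n → ℤ) : pairR (u + v) w = pairR u w + pairR v w := by
  simp [pairR, add_mul, Finset.sum_add_distrib]

lemma pairR_neg (u : Fin n → ℤ) : pairR (-u) w = -pairR u w := by
  simp [pairR, Finset.sum_neg_distrib]

lemma pairR_single (i : Fin n) : pairR (Pi.single i 1) w = w i := by
  simp [pairR, Pi.single_apply]

lemma xu_mul_xu (u v : Fin n → ℤ) : (xu u * xu v : Laur k n) = xu (u + v) := by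
  simp [xu, single_mul_single]

lemma xu_neg_mul_xu_mul (u : Fin n → ℤ) (f : Laur k n) : xu (-u) * (xu u * f) = f := by
  rw [← mul_assoc, xu_mul_xu, neg_add_cancel, xu, ← one_def, one_mul]

lemma coeff_xu_mul (u v : Fin n → ℤ) (f : Laur k n) : (xu u * f).coeff v = f.coeff (v - u) := by
  simp [xu, neg_add_eq_sub]

def weightComponent (c : ℝ) : Laur k n →ₗ[k] Laur k n where
  toFun f := ofCoeff (f.coeff.filter fun u => pairR u w = c)
  map_add' f g := by ext; simp [Finsupp.filter_add]
  map_smul' a f := by ext; simp [Finsupp.filter_smul]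

lemma coeff_weightComponent (c : ℝ) (f : Laur k n) (u : Fin n → ℤ) :
    (weightComponent w c f).coeff u = if pairR u w = c then f.coeff u else 0 :=
  Finsupp.filter_apply _ _ _

lemma initR_eq_weightComponent (f : Laur k n) : initR w f = weightComponent w (tropR w f) f := rfl

lemma tropR_le {f : Laur k n} {u : Fin n → ℤ} (hu : u ∈ f.coeff.support) :
    tropR w f ≤ pairR u w :=
  csInf_le ((f.coeff.support.finite_toSet.image _).bddBelow) ⟨u, hu, rfl⟩

lemma exists_pairR_eq_tropR {f : Laur k n} (hf : f ≠ 0) :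
    ∃ u ∈ f.coeff.support, pairR u w = tropR w f := by
  have hne : f.coeff.support.Nonempty := by simpa using hf
  exact ((Finset.coe_nonempty.mpr hne).image _).csInf_mem (f.coeff.support.finite_toSet.image _)

lemma le_tropR {f : Laur k n} (hf : f ≠ 0) {c : ℝ} (h : ∀ u ∈ f.coeff.support, c ≤ pairR u w) :
    c ≤ tropR w f := by
  obtain ⟨u, hu, he⟩ := exists_pairR_eq_tropR w hf
  exact he ▸ h u hu

lemma weightComponent_eq_zero_of_lt_tropR {f : Laur k n} {c : ℝ} (hc : c < tropR w f) :
    weightComponent w c f = 0 := by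
  ext u
  rw [coeff_weightComponent]
  split_ifs with h
  · have : u ∉ f.coeff.support := fun hu => (tropR_le w hu).not_gt (h ▸ hc)
    simpa using this
  · rfl

lemma weightComponent_xu_mul (c : ℝ) (u : Fin n → ℤ) (f : Laur k n) :
    weightComponent w c (xu u * f) = xu u * weightComponent w (c - pairR u w) f := by
  ext v
  have : pairR (v - u) w = pairR v w - pairR u w := by
    rw [sub_eq_add_neg, pairR_add, pairR_neg, ← sub_eq_add_neg]
  simp only [coeff_weightComponent, coeff_xu_mul, this, sub_left_inj]

lemma tropR_xu_mul (u : Fin n → ℤ) {f : Laur k n} (hf : f ≠ 0) :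
    tropR w (xu u * f) = pairR u w + tropR w f := by
  have hsupp : ∀ v, v ∈ (xu u * f).coeff.support ↔ v - u ∈ f.coeff.support := by
    simp [coeff_xu_mul]
  have hpair : ∀ v, pairR v w = pairR u w + pairR (v - u) w := fun v => by
    rw [← pairR_add, add_sub_cancel]
  obtain ⟨v, hv, hvt⟩ := exists_pairR_eq_tropR w hf
  refine le_antisymm ?_ (le_tropR w ?_ fun v hv => ?_)
  · have := tropR_le w ((hsupp (u + v)).mpr (by rwa [add_sub_cancel_left]))
    rwa [pairR_add, hvt] at this
  · intro h
    exact hf (by simpa [h] using (xu_neg_mul_xu_mul u f).symm)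
  · rw [hpair v]
    linarith [tropR_le w ((hsupp v).mp hv)]

lemma initR_xu_mul (u : Fin n → ℤ) (f : Laur k n) : initR w (xu u * f) = xu u * initR w f := by
  rcases eq_or_ne f 0 with rfl | hf
  · simp [initR_eq_weightComponent]
  rw [initR_eq_weightComponent, tropR_xu_mul w u hf, weightComponent_xu_mul, add_sub_cancel_left,
    initR_eq_weightComponent]

end Laurent

section Exponents

open MvPolynomial

def natExp : (Fin n →₀ ℕ) →+ (Fin n → ℤ) where
  toFun m i := m i
  map_zero' := by ext; simp
  map_add' a b := by ext; simp

@[simp] lemma natExp_apply (m : Fin n →₀ ℕ) (i : Fin n) : natExp m i = m i := rfl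

lemma natExp_single (i : Fin n) : natExp (Finsupp.single i 1) = Pi.single i 1 := by
  ext j
  by_cases h : j = i <;> simp [h]

lemma natExp_injective : Function.Injective (natExp (n := n)) := fun a b h =>
  Finsupp.ext fun i => by simpa using congrFun h i

lemma toLaurent_eq_mapDomainAlgHom :
    (toLaurent : MvPolynomial (Fin n) k →ₐ[k] Laur k n) =
      AddMonoidAlgebra.mapDomainAlgHom k k natExp :=
  MvPolynomial.algHom_ext fun i => by
    rw [toLaurent, aeval_X, AddMonoidAlgebra.mapDomainAlgHom_apply, X, ← single_eq_monomial,
      AddMonoidAlgebra.mapDomain_single, natExp_single, xu]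

lemma toLaurent_monomial (m : Fin n →₀ ℕ) (a : k) :
    toLaurent (monomial m a) = AddMonoidAlgebra.single (natExp m) a := by
  rw [toLaurent_eq_mapDomainAlgHom]
  simp [monomial]

lemma toLaurent_monomial_one (m : Fin n →₀ ℕ) : toLaurent (monomial m (1 : k)) = xu (natExp m) :=
  toLaurent_monomial m 1

lemma support_toLaurent (p : MvPolynomial (Fin n) k) :
    (toLaurent p).coeff.support = p.support.image natExp := by
  rw [toLaurent_eq_mapDomainAlgHom]
  exact Finsupp.mapDomain_support_of_injective natExp_injective _

lemma toLaurent_injective : Function.Injective (toLaurent (k := k) (n := n)) := by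
  rw [toLaurent_eq_mapDomainAlgHom]
  exact AddMonoidAlgebra.mapDomain_injective natExp_injective

lemma exists_xu_mul_eq_toLaurent (f : Laur k n) :
    ∃ m : Fin n →₀ ℕ, ∃ p : MvPolynomial (Fin n) k, xu (natExp m) * f = toLaurent p := by
  induction f using AddMonoidAlgebra.induction_linear with
  | zero => exact ⟨0, 0, by simp⟩
  | add f g hf hg =>
    obtain ⟨m, p, hp⟩ := hf
    obtain ⟨m', p', hp'⟩ := hg
    refine ⟨m + m', monomial m' 1 * p + monomial m 1 * p', ?_⟩
    simp only [map_add, map_mul, toLaurent_monomial_one, ← hp, ← hp', ← xu_mul_xu]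
    ring
  | single u a =>
    refine ⟨Finsupp.equivFunOnFinite.symm fun i => (-u i).toNat,
      monomial (Finsupp.equivFunOnFinite.symm fun i => (u i).toNat) a, ?_⟩
    rw [toLaurent_monomial, xu, AddMonoidAlgebra.single_mul_single, one_mul]
    congr 1
    ext i
    simp only [Pi.add_apply, natExp_apply, Finsupp.equivFunOnFinite_symm_apply_apply,
      Int.ofNat_toNat]
    omega

lemma exists_xu_mul_mem_map {I : Ideal (MvPolynomial (Fin n) k)} {f : Laur k n}
    (hf : f ∈ I.map toLaurent) :
    ∃ m : Fin n →₀ ℕ, ∃ p ∈ I, xu (natExp m) * f = toLaurent p := by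
  induction hf using Submodule.span_induction with
  | mem f hf =>
    obtain ⟨p, hp, rfl⟩ := hf
    exact ⟨0, p, hp, by simp [xu, ← AddMonoidAlgebra.one_def]⟩
  | zero => exact ⟨0, 0, I.zero_mem, by simp⟩
  | add f g _ _ hf hg =>
    obtain ⟨m, p, hpI, hp⟩ := hf
    obtain ⟨m', p', hpI', hp'⟩ := hg
    refine ⟨m + m', monomial m' 1 * p + monomial m 1 * p',
      I.add_mem (I.mul_mem_left _ hpI) (I.mul_mem_left _ hpI'), ?_⟩
    simp only [map_add, map_mul, toLaurent_monomial_one, ← hp, ← hp', ← xu_mul_xu]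
    ring
  | smul a f _ hf =>
    obtain ⟨m, p, hpI, hp⟩ := hf
    obtain ⟨m', p', hp'⟩ := exists_xu_mul_eq_toLaurent a
    refine ⟨m' + m, p' * p, I.mul_mem_left _ hpI, ?_⟩
    rw [map_mul, ← hp, ← hp', map_add, ← xu_mul_xu, smul_eq_mul]
    ring

end Exponents

section WeightedPolynomials

open MvPolynomial

variable (w : Fin n → ℝ)

def weightAtLeast (a : ℝ) : Submodule k (MvPolynomial (Fin n) k) :=
  restrictSupport k {m | a ≤ pairR (natExp m) w}

lemma monomial_mem_weightAtLeast {a : ℝ} {m : Fin n →₀ ℕ} (h : a ≤ pairR (natExp m) w) (r : k) :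
    monomial m r ∈ weightAtLeast w a := by
  rw [weightAtLeast, mem_restrictSupport_iff]
  intro m' hm'
  obtain rfl := Finset.mem_singleton.mp (support_monomial_subset hm')
  exact h

lemma mem_weightAtLeast_tropR (p : MvPolynomial (Fin n) k) :
    p ∈ weightAtLeast w (tropR w (toLaurent p)) := fun m hm =>
  tropR_le w (by rw [support_toLaurent]; exact Finset.mem_image_of_mem _ hm)

lemma le_tropR_toLaurent {a : ℝ} {p : MvPolynomial (Fin n) k} (hp : p ∈ weightAtLeast w a)
    (hp0 : p ≠ 0) : a ≤ tropR w (toLaurent p) := by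
  refine le_tropR w (fun h => hp0 (toLaurent_injective (by rw [h, map_zero]))) fun u hu => ?_
  rw [support_toLaurent] at hu
  obtain ⟨m, hm, rfl⟩ := Finset.mem_image.mp hu
  exact hp hm

end WeightedPolynomials

section LinearForms

open MvPolynomial

def linearForm (c : Fin n →₀ k) (j : Fin n) : MvPolynomial (Fin n) k :=
  X j - Finsupp.linearCombination k X c

variable {c : Fin n →₀ k} {j : Fin n}

lemma eval_linearForm (v : Fin n → k) :
    eval v (linearForm c j) = v j - Finsupp.linearCombination k v c := by
  simp [linearForm, Finsupp.linearCombination_apply, Finsupp.sum, map_sum]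

lemma coeff_linearForm_single (hj : j ∉ c.support) :
    coeff (Finsupp.single j 1) (linearForm c j) = 1 := by
  simp only [linearForm, Finsupp.linearCombination_apply, Finsupp.sum, coeff_sub, coeff_X,
    ↓reduceIte, coeff_sum, coeff_smul, smul_eq_mul, mul_ite, mul_one, mul_zero, sub_eq_self]
  exact Finset.sum_eq_zero fun i hi =>
    if_neg fun h => hj (by rwa [← Finsupp.single_left_injective one_ne_zero h])

lemma linearForm_ne_zero (hj : j ∉ c.support) : linearForm c j ≠ 0 := fun h => by
  simpa [h] using coeff_linearForm_single hj

lemma monomial_add_single_eq_smul_mul_linearForm_add (t : Fin n →₀ ℕ) (r : k) :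
    monomial (t + Finsupp.single j 1) r =
      r • (monomial t 1 * linearForm c j) +
        ∑ i ∈ c.support, monomial (t + Finsupp.single i 1) (r * c i) := by
  simp only [linearForm, Finsupp.linearCombination_apply, Finsupp.sum, mul_sub, Finset.mul_sum,
    X, monomial_mul, one_mul, smul_sub, Finset.smul_sum, smul_monomial, smul_eq_mul,
    mul_one]
  simp

variable (w : Fin n → ℝ)

lemma linearForm_mem_weightAtLeast (hw : ∀ i ∈ c.support, w j ≤ w i) :
    linearForm c j ∈ weightAtLeast w (w j) := by
  have hX : ∀ i, w j ≤ w i → X i ∈ weightAtLeast (k := k) w (w j) := fun i hi =>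
    monomial_mem_weightAtLeast w (by rwa [natExp_single, pairR_single]) 1
  refine sub_mem (hX j le_rfl) ?_
  rw [Finsupp.linearCombination_apply]
  exact Submodule.sum_mem _ fun i hi => Submodule.smul_mem _ _ (hX i (hw i hi))

lemma tropR_toLaurent_linearForm (hj : j ∉ c.support) (hw : ∀ i ∈ c.support, w j ≤ w i) :
    tropR w (toLaurent (linearForm c j)) = w j := by
  refine le_antisymm ?_ (le_tropR_toLaurent w (linearForm_mem_weightAtLeast w hw)
    (linearForm_ne_zero hj))
  have hmem : Pi.single j 1 ∈ (toLaurent (linearForm c j)).coeff.support := by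
    rw [support_toLaurent, ← natExp_single]
    exact Finset.mem_image_of_mem _ (by simp [coeff_linearForm_single hj])
  simpa [pairR_single] using tropR_le w hmem

end LinearForms

section Division

open MvPolynomial

variable (w : Fin n → ℝ) (B : Finset (Fin n)) (c : Fin n → Fin n →₀ k)

def linearFormSpanAtLeast (a : ℝ) : Submodule k (MvPolynomial (Fin n) k) :=
  Submodule.span k {p | ∃ j ∉ B, ∃ t : Fin n →₀ ℕ,
    a ≤ pairR (natExp t) w + w j ∧ p = monomial t 1 * linearForm (c j) j}

variable {w B c}

lemma linearFormSpanAtLeast_le_span (a : ℝ) :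
    linearFormSpanAtLeast w B c a ≤
      (Ideal.span ((fun j => linearForm (c j) j) '' ↑Bᶜ)).restrictScalars k := by
  rw [linearFormSpanAtLeast, Submodule.span_le]
  rintro _ ⟨j, hj, t, -, rfl⟩
  exact Ideal.mul_mem_left _ _ (Ideal.subset_span ⟨j, by simpa using hj, rfl⟩)

lemma monomial_mem_supported_sup_linearFormSpanAtLeast
    (hcB : ∀ j ∉ B, (c j).support ⊆ B) (hw : ∀ j ∉ B, ∀ i ∈ (c j).support, w j ≤ w i)
    {a : ℝ} {m : Fin n →₀ ℕ} (hm : a ≤ pairR (natExp m) w) (r : k) :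
    monomial m r ∈
      Subalgebra.toSubmodule (supported k (B : Set (Fin n))) ⊔ linearFormSpanAtLeast w B c a := by
  set deg : (Fin n →₀ ℕ) →+ ℕ := Finsupp.weight fun l => if l ∈ B then 0 else 1
  obtain ⟨N, hN⟩ : ∃ N, deg m = N := ⟨_, rfl⟩
  induction N using Nat.strong_induction_on generalizing m r with
  | _ N ih =>
    by_cases hmB : ∀ j ∈ m.support, j ∈ B
    · refine Submodule.mem_sup_left ?_
      rcases eq_or_ne r 0 with rfl | hr
      · simp
      · exact mem_supported.mpr (by rw [vars_monomial hr]; exact_mod_cast hmB)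
    push Not at hmB
    obtain ⟨j, hjm, hjB⟩ := hmB
    obtain ⟨t, rfl⟩ : ∃ t, m = t + Finsupp.single j 1 :=
      ⟨m - Finsupp.single j 1, by
        ext l; by_cases hl : l = j <;> simp_all [Nat.one_le_iff_ne_zero]⟩
    have hwt : ∀ i, pairR (natExp (t + Finsupp.single i 1)) w = pairR (natExp t) w + w i := by
      intro i; rw [map_add, pairR_add, natExp_single, pairR_single]
    rw [monomial_add_single_eq_smul_mul_linearForm_add]
    refine add_mem (Submodule.mem_sup_right (Submodule.smul_mem _ _ (Submodule.subset_span
      ⟨j, hjB, t, (hwt j).symm ▸ hm, rfl⟩))) (Submodule.sum_mem _ fun i hi => ?_)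
    have hiB : i ∈ B := hcB j hjB hi
    refine ih (deg t) ?_ (by rw [hwt] at hm ⊢; linarith [hw j hjB i hi]) _ ?_
    · rw [← hN, map_add]; simp [deg, Finsupp.weight_single, hjB]
    · rw [map_add]; simp [deg, Finsupp.weight_single, hiB]

lemma weightAtLeast_le_supported_sup_linearFormSpanAtLeast
    (hcB : ∀ j ∉ B, (c j).support ⊆ B) (hw : ∀ j ∉ B, ∀ i ∈ (c j).support, w j ≤ w i) (a : ℝ) :
    weightAtLeast (k := k) w a ≤
      Subalgebra.toSubmodule (supported k (B : Set (Fin n))) ⊔ linearFormSpanAtLeast w B c a := by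
  rw [weightAtLeast, restrictSupport_eq_span, Submodule.span_le]
  rintro _ ⟨m, hm, rfl⟩
  exact monomial_mem_supported_sup_linearFormSpanAtLeast hcB hw hm 1

end Division

section Subspace

open MvPolynomial

variable {V : Submodule k (Fin n → k)}

lemma exists_mem_eqOn_of_linearIndepOn {s : Set (Fin n)} (hs : LinearIndepOn k (coordOn V) s)
    (y : Fin n → k) : ∃ v ∈ V, ∀ i ∈ s, v i = y i := by
  let T : V →ₗ[k] (s → k) := LinearMap.pi fun i => coordOn V i
  have hT : Submodule.span k (Set.range T) = ⊤ := span_flip_eq_top_iff_linearIndependent.mpr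
    (hs.map' (LinearMap.ltoFun k V k k) (LinearMap.ker_eq_bot.mpr LinearMap.coe_injective))
  rw [← LinearMap.coe_range, Submodule.span_eq, LinearMap.range_eq_top] at hT
  obtain ⟨v, hv⟩ := hT fun i => y i
  exact ⟨v, v.2, fun i hi => congrFun hv ⟨i, hi⟩⟩

lemma eq_zero_of_mem_supported_of_mem_vanishingIdeal [Infinite k] {s : Set (Fin n)}
    (hs : LinearIndepOn k (coordOn V) s) {r : MvPolynomial (Fin n) k} (hr : r ∈ supported k s)
    (hrV : r ∈ vanishingIdeal V) : r = 0 := by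
  refine MvPolynomial.funext fun y => ?_
  obtain ⟨v, hv, hvy⟩ := exists_mem_eqOn_of_linearIndepOn hs y
  rw [map_zero, ← hrV v hv]
  refine hom_congr_vars (by ext; simp) (fun i hi _ => ?_) rfl
  simp [hvy i (mem_supported.mp hr hi)]

lemma linearForm_mem_vanishingIdeal {c : Fin n →₀ k} {j : Fin n}
    (hc : Finsupp.linearCombination k (coordOn V) c = coordOn V j) :
    linearForm c j ∈ vanishingIdeal V := by
  intro v hv
  simpa [eval_linearForm, Finsupp.linearCombination_apply, Finsupp.sum, coordOn, sub_eq_zero]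
    using (LinearMap.congr_fun hc ⟨v, hv⟩).symm

variable {w : Fin n → ℝ} {B : Finset (Fin n)} {c : Fin n → Fin n →₀ k}

lemma span_linearForm_le_vanishingIdeal
    (hc : ∀ j ∉ B, Finsupp.linearCombination k (coordOn V) (c j) = coordOn V j) :
    Ideal.span ((fun j => linearForm (c j) j) '' ↑Bᶜ) ≤ vanishingIdeal V := by
  rw [Ideal.span_le]
  rintro _ ⟨j, hj, rfl⟩
  exact linearForm_mem_vanishingIdeal (hc j (by simpa using hj))

lemma mem_linearFormSpanAtLeast_of_mem_vanishingIdeal [Infinite k]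
    (hB : LinearIndepOn k (coordOn V) (B : Set (Fin n)))
    (hc : ∀ j ∉ B, Finsupp.linearCombination k (coordOn V) (c j) = coordOn V j)
    (hcB : ∀ j ∉ B, (c j).support ⊆ B) (hw : ∀ j ∉ B, ∀ i ∈ (c j).support, w j ≤ w i)
    {a : ℝ} {q : MvPolynomial (Fin n) k} (hqV : q ∈ vanishingIdeal V)
    (hq : q ∈ weightAtLeast w a) : q ∈ linearFormSpanAtLeast w B c a := by
  obtain ⟨r, hr, s, hs, rfl⟩ :=
    Submodule.mem_sup.mp (weightAtLeast_le_supported_sup_linearFormSpanAtLeast hcB hw a hq)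
  have hsV : s ∈ vanishingIdeal V :=
    span_linearForm_le_vanishingIdeal hc (linearFormSpanAtLeast_le_span a hs)
  have hr0 : r = 0 := eq_zero_of_mem_supported_of_mem_vanishingIdeal hB hr
    (by simpa using sub_mem hqV hsV)
  simpa [hr0] using hs

end Subspace

section InitialForms

variable {w : Fin n → ℝ} {B : Finset (Fin n)} {c : Fin n → Fin n →₀ k}

lemma weightComponent_toLaurent_mem_span
    (hcB : ∀ j ∉ B, (c j).support ⊆ B) (hw : ∀ j ∉ B, ∀ i ∈ (c j).support, w j ≤ w i)
    {a : ℝ} {q : MvPolynomial (Fin n) k} (hq : q ∈ linearFormSpanAtLeast w B c a) :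
    weightComponent w a (toLaurent q) ∈
      Ideal.span ((fun j => initR w (toLaurent (linearForm (c j) j))) '' ↑Bᶜ) := by
  induction hq using Submodule.span_induction with
  | mem p hp =>
    obtain ⟨j, hj, t, ht, rfl⟩ := hp
    have htrop := tropR_toLaurent_linearForm w (fun h => hj (hcB j hj h)) (hw j hj)
    rw [map_mul, toLaurent_monomial_one, weightComponent_xu_mul]
    refine Ideal.mul_mem_left _ _ ?_
    rcases (show a - pairR (natExp t) w ≤ w j by linarith).eq_or_lt with h | h
    · rw [h, ← htrop, ← initR_eq_weightComponent]
      exact Ideal.subset_span ⟨j, by simpa using hj, rfl⟩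
    · rw [weightComponent_eq_zero_of_lt_tropR w (htrop ▸ h)]
      exact zero_mem _
  | zero => simp
  | add p q _ _ hp hq => simpa using add_mem hp hq
  | smul r p _ hp => simpa using Submodule.smul_of_tower_mem _ r hp

end InitialForms

lemma Matroid.exists_isBase_isGreatest_sum {α : Type*} [Fintype α] (M : Matroid α) (w : α → ℝ) :
    ∃ B : Finset α, M.IsBase ↑B ∧
      IsGreatest {x | ∃ B, M.IsBase B ∧ x = ∑ᶠ i ∈ B, w i} (∑ i ∈ B, w i) := by
  obtain ⟨B₀, hB₀⟩ := M.exists_isBase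
  obtain ⟨B, hB, hmax⟩ := (Finset.univ.filter fun B : Finset α => M.IsBase ↑B).exists_max_image
    (fun B => ∑ i ∈ B, w i) ⟨B₀.toFinset, by simpa using hB₀⟩
  rw [Finset.mem_filter] at hB
  refine ⟨B, hB.2, ⟨B, hB.2, (finsum_mem_coe_finset _ _).symm⟩, ?_⟩
  rintro _ ⟨B', hB', rfl⟩
  rw [← B'.coe_toFinset, finsum_mem_coe_finset]
  exact hmax _ (by simpa using hB')

namespace IsSubspaceMatroid

variable {V : Submodule k (Fin n → k)} {M : Matroid (Fin n)} {B : Set (Fin n)}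

lemma linearIndepOn (hM : IsSubspaceMatroid V M) (hB : M.Indep B) :
    LinearIndepOn k (coordOn V) B :=
  (hM.2 B).mp hB

lemma indep (hM : IsSubspaceMatroid V M) (hB : LinearIndepOn k (coordOn V) B) : M.Indep B :=
  (hM.2 B).mpr hB

lemma coordOn_mem_span (hM : IsSubspaceMatroid V M) (hB : M.IsBase B) (j : Fin n) :
    coordOn V j ∈ Submodule.span k (coordOn V '' B) := by
  refine (hM.linearIndepOn hB.indep).mem_span_iff.mpr fun h => ?_
  by_contra hj
  exact (hB.insert_dep ⟨by simp [hM.1], hj⟩).not_indep (hM.indep h)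

lemma exists_linearCombination_eq (hM : IsSubspaceMatroid V M) (hB : M.IsBase B) (j : Fin n) :
    ∃ c ∈ Finsupp.supported k k B, Finsupp.linearCombination k (coordOn V) c = coordOn V j :=
  (Finsupp.mem_span_image_iff_linearCombination k).mp (hM.coordOn_mem_span hB j)

lemma ncard_eq_finrank (hM : IsSubspaceMatroid V M) (hB : M.IsBase B) :
    B.ncard = Module.finrank k V := by
  let T : V →ₗ[k] (B → k) := LinearMap.pi fun i => coordOn V i
  have hinj : Function.Injective T := by
    rw [← LinearMap.ker_eq_bot, Submodule.eq_bot_iff]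
    intro v hv
    have hspan : Submodule.span k (coordOn V '' B) ≤ LinearMap.ker (Module.Dual.eval k V v) :=
      Submodule.span_le.mpr fun _ ⟨i, hi, hφ⟩ => hφ ▸ congrFun hv ⟨i, hi⟩
    ext j
    exact hspan (hM.coordOn_mem_span hB j)
  have hsurj : Function.Surjective T := fun y => by
    obtain ⟨v, hv, hvy⟩ := exists_mem_eqOn_of_linearIndepOn (hM.linearIndepOn hB.indep)
      (fun i => if h : i ∈ B then y ⟨i, h⟩ else 0)
    exact ⟨⟨v, hv⟩, funext fun i => by simpa [T, coordOn] using hvy i i.2⟩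
  rw [(LinearEquiv.ofBijective T ⟨hinj, hsurj⟩).finrank_eq, Module.finrank_pi,
    ← Nat.card_eq_fintype_card, Nat.card_coe_set_eq]

lemma isBase_exchange (hM : IsSubspaceMatroid V M) (hB : M.IsBase B) {c : Fin n →₀ k}
    (hcB : c ∈ Finsupp.supported k k B) {j : Fin n}
    (hc : Finsupp.linearCombination k (coordOn V) c = coordOn V j) (hj : j ∉ B) {i : Fin n}
    (hi : c i ≠ 0) : M.IsBase (insert j (B \ {i})) := by
  have hBind : LinearIndepOn k (coordOn V) B := hM.linearIndepOn hB.indep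
  refine hB.exchange_isBase_of_indep hj (hM.indep ((hBind.mono Set.sdiff_subset).insert
    fun hmem => hi ?_))
  obtain ⟨l, hl, hlj⟩ := (Finsupp.mem_span_image_iff_linearCombination k).mp hmem
  have hlc : l = c := sub_eq_zero.mp <| linearIndepOn_iff.mp hBind _
    (sub_mem (Finsupp.supported_mono Set.sdiff_subset hl) hcB) (by rw [map_sub, hlj, hc, sub_self])
  rw [← hlc]
  exact (Finsupp.mem_supported' _ _).mp hl i (by simp)

lemma weight_le_of_mem_support (hM : IsSubspaceMatroid V M) {B : Finset (Fin n)} (hB : M.IsBase ↑B)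
    {w : Fin n → ℝ} (hmax : IsGreatest {x | ∃ B, M.IsBase B ∧ x = ∑ᶠ i ∈ B, w i} (∑ i ∈ B, w i))
    {c : Fin n →₀ k} (hcB : c ∈ Finsupp.supported k k ↑B) {j : Fin n}
    (hc : Finsupp.linearCombination k (coordOn V) c = coordOn V j) (hj : j ∉ B) {i : Fin n}
    (hi : i ∈ c.support) : w j ≤ w i := by
  have hiB : i ∈ B := (Finsupp.mem_supported _ _).mp hcB hi
  have hexch := hmax.2 ⟨_, hM.isBase_exchange hB hcB hc (by simpa using hj)
    (Finsupp.mem_support_iff.mp hi), (finsum_mem_coe_finset w (insert j (B.erase i))).symm.trans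
      (by simp)⟩
  rw [Finset.sum_insert (by simp [hj]), ← Finset.add_sum_erase B w hiB] at hexch
  linarith

end IsSubspaceMatroid

section Generators

variable [Infinite k] {V : Submodule k (Fin n → k)} {B : Finset (Fin n)} {c : Fin n → Fin n →₀ k}

lemma vanishingIdeal_eq_span_linearForm (hB : LinearIndepOn k (coordOn V) (B : Set (Fin n)))
    (hc : ∀ j ∉ B, Finsupp.linearCombination k (coordOn V) (c j) = coordOn V j)
    (hcB : ∀ j ∉ B, (c j).support ⊆ B) :
    vanishingIdeal V = Ideal.span ((fun j => linearForm (c j) j) '' ↑Bᶜ) := by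
  refine le_antisymm (fun q hq => ?_) (span_linearForm_le_vanishingIdeal hc)
  -- division with respect to the zero weight, for which every weight bound holds
  exact linearFormSpanAtLeast_le_span 0 <|
    mem_linearFormSpanAtLeast_of_mem_vanishingIdeal (w := 0) hB hc hcB (fun _ _ _ _ => le_rfl) hq
      fun m _ => by simp [pairR]

lemma initIdealR_map_eq_span_initR_linearForm {w : Fin n → ℝ}
    (hB : LinearIndepOn k (coordOn V) (B : Set (Fin n)))
    (hc : ∀ j ∉ B, Finsupp.linearCombination k (coordOn V) (c j) = coordOn V j)
    (hcB : ∀ j ∉ B, (c j).support ⊆ B) (hw : ∀ j ∉ B, ∀ i ∈ (c j).support, w j ≤ w i) :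
    initIdealR w ((vanishingIdeal V).map toLaurent) =
      Ideal.span ((fun j => initR w (toLaurent (linearForm (c j) j))) '' ↑Bᶜ) := by
  refine le_antisymm (Ideal.span_le.mpr ?_) (Ideal.span_le.mpr ?_)
  · rintro _ ⟨f, hf, rfl⟩
    obtain ⟨m, q, hqV, hq⟩ := exists_xu_mul_mem_map hf
    have hmem := weightComponent_toLaurent_mem_span hcB hw
      (mem_linearFormSpanAtLeast_of_mem_vanishingIdeal hB hc hcB hw hqV
        (mem_weightAtLeast_tropR w q))
    rw [← initR_eq_weightComponent, ← hq, initR_xu_mul] at hmem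
    rw [← xu_neg_mul_xu_mul (natExp m) (initR w f)]
    exact Ideal.mul_mem_left _ _ hmem
  · rintro _ ⟨j, hj, rfl⟩
    exact Ideal.subset_span ⟨_, Ideal.mem_map_of_mem _
      (linearForm_mem_vanishingIdeal (hc j (by simpa using hj))), rfl⟩

end Generators

theorem exists_generators_computing_weight_general
    {k : Type*} [Field k] [IsAlgClosed k] {n d : ℕ}
    (V : Submodule k (Fin n → k))
    (hdim : Module.finrank k V = d)
    (M : Matroid (Fin n)) (hM : IsSubspaceMatroid V M)
    (w : Fin n → ℝ) :
    ∃ f : Fin (n - d) → MvPolynomial (Fin n) k,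
      (∀ j, f j ≠ 0) ∧
      Ideal.span (Set.range f) = vanishingIdeal V ∧
      Ideal.span (Set.range fun j => initR w (toLaurent (f j))) =
        initIdealR w (Ideal.map (toLaurent (k := k) (n := n)) (vanishingIdeal V)) ∧
      (∑ i, w i) - (∑ j, tropR w (toLaurent (f j))) =
        sSup {x : ℝ | ∃ B : Set (Fin n), M.IsBase B ∧ x = ∑ᶠ i ∈ B, w i} := by
  obtain ⟨B, hB, hmax⟩ := M.exists_isBase_isGreatest_sum w
  choose c hcB hc using hM.exists_linearCombination_eq hB
  have hcB' : ∀ j ∉ B, (c j).support ⊆ B := fun j _ => by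
    exact_mod_cast (Finsupp.mem_supported _ _).mp (hcB j)
  have hw : ∀ j ∉ B, ∀ i ∈ (c j).support, w j ≤ w i := fun j hj _ hi =>
    hM.weight_le_of_mem_support hB hmax (hcB j) (hc j) hj hi
  have hBind := hM.linearIndepOn hB.indep
  have hjc : ∀ j ∉ B, j ∉ (c j).support := fun j hj h => hj (hcB' j hj h)
  have hcard : Bᶜ.card = n - d := by
    rw [Finset.card_compl, Fintype.card_fin, ← hdim, ← hM.ncard_eq_finrank hB, Set.ncard_coe_finset]
  set σ := Bᶜ.orderEmbOfFin hcard
  have hσ : ∀ t, σ t ∉ B := fun t => Finset.mem_compl.mp (Bᶜ.orderEmbOfFin_mem hcard t)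
  refine ⟨fun t => linearForm (c (σ t)) (σ t), fun t => linearForm_ne_zero (hjc _ (hσ t)),
    ?_, ?_, ?_⟩
  · rw [vanishingIdeal_eq_span_linearForm hBind (fun j _ => hc j) hcB',
      ← Finset.range_orderEmbOfFin Bᶜ hcard, ← Set.range_comp]
    rfl
  · rw [initIdealR_map_eq_span_initR_linearForm hBind (fun j _ => hc j) hcB' hw,
      ← Finset.range_orderEmbOfFin Bᶜ hcard, ← Set.range_comp]
    rfl
  · have htrop : ∑ t, tropR w (toLaurent (linearForm (c (σ t)) (σ t))) = ∑ j ∈ Bᶜ, w j := by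
      rw [← Finset.map_orderEmbOfFin_univ Bᶜ hcard, Finset.sum_map]
      exact Finset.sum_congr rfl fun t _ =>
        tropR_toLaurent_linearForm w (hjc _ (hσ t)) (hw _ (hσ t))
    rw [htrop, hmax.csSup_eq, ← Finset.sum_add_sum_compl B w, add_sub_cancel_right]

/-- Let `V ⊆ kⁿ` be a `d`-dimensional subspace (`1 ≤ d < n`) not
contained in any coordinate hyperplane, with matroid `M`, and let `w ∈ ℝⁿ`.  Then there are
`n − d` polynomials `f₁,…,f_{n−d}` generating the vanishing ideal `I(V)`, whose initial
forms generate the initial ideal `in_w (I(V)·k[x₁^{±1},…,x_n^{±1}])`, and such that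
`∑ᵢ wᵢ − ∑ⱼ trop(fⱼ)(w) = wt_M(w)`, where `wt_M(w)` is the maximum of `∑_{i∈B} wᵢ` over
bases `B` of `M`. -/
theorem exists_generators_computing_weight
    {k : Type*} [Field k] [IsAlgClosed k] {n d : ℕ}
    (hd : 1 ≤ d) (hdn : d < n) (V : Submodule k (Fin n → k))
    (hdim : Module.finrank k V = d)
    (hcoord : ∀ i : Fin n, ∃ v ∈ V, v i ≠ 0)
    (M : Matroid (Fin n)) (hM : IsSubspaceMatroid V M)
    (w : Fin n → ℝ) :
    ∃ f : Fin (n - d) → MvPolynomial (Fin n) k,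
      (∀ j, f j ≠ 0) ∧
      Ideal.span (Set.range f) = vanishingIdeal V ∧
      Ideal.span (Set.range fun j => initR w (toLaurent (f j))) =
        initIdealR w (Ideal.map (toLaurent (k := k) (n := n)) (vanishingIdeal V)) ∧
      (∑ i, w i) - (∑ j, tropR w (toLaurent (f j))) =
        sSup {x : ℝ | ∃ B : Set (Fin n), M.IsBase B ∧ x = ∑ᶠ i ∈ B, w i} :=
  exists_generators_computing_weight_general V hdim M hM w
end
end
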